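/- Let D be an oriented knot diagram with n ≥ 1 crossings, modeled by a Gauss code g, and let D* be the mirror image of D. Then X_{D*}(t) = t^(n−1) · X_D(t⁻¹); that is, for every k with 0 ≤ k ≤ n−1, the coefficient of t^k in X_{D*}(t) equals the coefficient of t^(n−1−k) in X_D(t) (X_{D*} is the reflection of X_D at degree n−1). -/

import Mathlib

open Polynomial Finset

/-- An oriented knot diagram with `n` crossings, modeled by its oriented Gauss code. -/
structure GaussCode (n : ℕ) where
  g : ZMod (2 * n) → Fin n × Bool
  o : Fin n → ZMod (2 * n)
  u : Fin n → ZMod (2 * n)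
  over_iff : ∀ (c : Fin n) (e : ZMod (2 * n)), g e = (c, true) ↔ e = o c
  under_iff : ∀ (c : Fin n) (e : ZMod (2 * n)), g e = (c, false) ↔ e = u c

namespace GaussCode

variable {n : ℕ}

/-- The warping degree of the base position `e`: the number of crossings whose
under-passage occurs strictly before its over-passage when traversing the diagram
starting at `e`. -/
def d (D : GaussCode n) (e : ZMod (2 * n)) : ℕ :=
  (Finset.univ.filter fun c : Fin n => (D.u c - e).val < (D.o c - e).val).card

/-- The warping crossing polynomial. -/
noncomputable def Xpoly (D : GaussCode n) : Polynomial ℤ :=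
  ∑ c : Fin n, Polynomial.X ^ D.d (D.o c)

/-- The warping polynomial. -/
noncomputable def Wpoly (D : GaussCode n) : Polynomial ℤ :=
  ∑ k ∈ Finset.range (2 * n), Polynomial.X ^ D.d (k : ZMod (2 * n))

/-- The warping degree of the diagram: minimum over all base positions. -/
noncomputable def wdeg (D : GaussCode n) : ℕ :=
  sInf (Set.range fun e : ZMod (2 * n) => D.d e)

/-- The diagram is alternating. -/
def Alternating (D : GaussCode n) : Prop :=
  ∀ e : ZMod (2 * n), (D.g e).2 ≠ (D.g (e + 1)).2

end GaussCode

/-!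
Mirroring swaps the over- and under-passage of every crossing, so from any base point a crossing
is counted by the warping degree of `D*` exactly when it is not counted for `D`:
`d_{D*} e = n - d_D e`. Hence the coefficient of `t^k` in `X_{D*}` counts the crossings `c` with
`d_D (u c) = n - k`.

Moving the base point across an over-passage raises `d_D` by one, and across an under-passage
lowers it by one. So `d_D` is a closed ±1 walk around the diagram, and the steps from level `m`
up to `m + 1` (over-passages with `d_D = m`) are as many as the steps from `m + 1` down to `m`
(under-passages with `d_D = m + 1`). For `m = n - 1 - k` the former count is the coefficient of
`t^(n-1-k)` in `X_D`.
-/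

namespace ZMod

variable {N : ℕ} [NeZero N]

lemma val_add_one_eq_mod (a : ZMod N) : (a + 1).val = (a.val + 1) % N := by
  rw [← val_natCast, Nat.cast_add, natCast_zmod_val, Nat.cast_one]

lemma val_add_one_of_ne_zero {a : ZMod N} (h : a + 1 ≠ 0) : (a + 1).val = a.val + 1 := by
  refine (val_add_one_eq_mod a).trans (Nat.mod_eq_of_lt (lt_of_le_of_ne a.val_lt fun hN => h ?_))
  rw [← val_eq_zero, val_add_one_eq_mod, hN, Nat.mod_self]

lemma val_add_one_of_eq_zero {a : ZMod N} (h : a + 1 = 0) : a.val + 1 = N := by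
  refine le_antisymm a.val_lt (not_lt.1 fun hlt => ?_)
  have := congrArg val h
  rw [val_add_one_eq_mod, Nat.mod_eq_of_lt hlt, val_zero] at this
  omega

lemma val_sub_add_one_add_one {x e : ZMod N} (h : x ≠ e) :
    (x - (e + 1)).val + 1 = (x - e).val := by
  have hx : x - (e + 1) + 1 = x - e := by ring
  rw [← val_add_one_of_ne_zero (hx ▸ sub_ne_zero.2 h), hx]

lemma val_sub_add_one_self_add_one (x : ZMod N) : (x - (x + 1)).val + 1 = N :=
  val_add_one_of_eq_zero (by ring)

end ZMod

lemma Equiv.Perm.card_filter_and_not_apply_eq {α : Type*} [Fintype α] (σ : Equiv.Perm α)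
    (P : α → Prop) [DecidablePred P] :
    #{x | P x ∧ ¬P (σ x)} = #{x | ¬P x ∧ P (σ x)} := by
  have hσ : #{x | P (σ x)} = #{x | P x} := by
    simp only [card_filter]
    exact Equiv.sum_comp σ fun x => if P x then 1 else 0
  classical
  calc #{x | P x ∧ ¬P (σ x)} = #(({x | P x} : Finset α) \ ({x | P (σ x)} : Finset α)) := by
        rw [filter_and_not]
    _ = #(({x | P (σ x)} : Finset α) \ ({x | P x} : Finset α)) := card_sdiff_comm hσ.symm
    _ = #{x | ¬P x ∧ P (σ x)} := by rw [← filter_and_not]; simp only [and_comm]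

lemma Finset.card_filter_eq_card_filter_add_one {α : Type*} [Fintype α] [DecidableEq α]
    {p q : α → Prop} [DecidablePred p] [DecidablePred q] {a : α} (hp : ¬p a) (hq : q a)
    (h : ∀ x ≠ a, q x ↔ p x) : #{x | q x} = #{x | p x} + 1 := by
  rw [← card_insert_of_notMem (by simpa using hp)]
  congr 1
  ext x
  by_cases hx : x = a <;> simp [hx, hq, h]

namespace GaussCode

variable {n : ℕ} (D : GaussCode n)

lemma g_o (c : Fin n) : D.g (D.o c) = (c, true) := (D.over_iff c _).2 rfl

lemma g_u (c : Fin n) : D.g (D.u c) = (c, false) := (D.under_iff c _).2 rfl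

lemma o_injective : Function.Injective D.o := fun c c' h =>
  congrArg Prod.fst ((D.g_o c).symm.trans (h ▸ D.g_o c'))

lemma u_injective : Function.Injective D.u := fun c c' h =>
  congrArg Prod.fst ((D.g_u c).symm.trans (h ▸ D.g_u c'))

lemma o_ne_u (c c' : Fin n) : D.o c ≠ D.u c' := fun h => by
  simpa [h, g_u] using D.g_o c

def gEquiv : ZMod (2 * n) ≃ Fin n × Bool where
  toFun := D.g
  invFun p := if p.2 then D.o p.1 else D.u p.1
  left_inv e := by
    rcases hge : D.g e with ⟨c, _ | _⟩
    · exact ((D.under_iff c e).1 hge).symm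
    · exact ((D.over_iff c e).1 hge).symm
  right_inv := by rintro ⟨c, _ | _⟩ <;> simp [g_o, g_u]

lemma card_filter_eq_card_filter_o_add_card_filter_u [NeZero n] (Q : ZMod (2 * n) → Prop)
    [DecidablePred Q] :
    #{e | Q e} = #{c | Q (D.o c)} + #{c | Q (D.u c)} := by
  simp only [card_filter]
  rw [← D.gEquiv.symm.sum_comp, Fintype.sum_prod_type, ← sum_add_distrib]
  simp only [Fintype.sum_bool]
  rfl

def UnderFirst (e : ZMod (2 * n)) (c : Fin n) : Prop := (D.u c - e).val < (D.o c - e).val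

instance (e : ZMod (2 * n)) : DecidablePred (D.UnderFirst e) := fun _ => Nat.decLt _ _

lemma d_eq_card (e : ZMod (2 * n)) : D.d e = #{c | D.UnderFirst e c} := rfl

lemma not_underFirst_o (c : Fin n) : ¬D.UnderFirst (D.o c) c := by
  simp [UnderFirst]

lemma underFirst_u (c : Fin n) : D.UnderFirst (D.u c) c := by
  simpa [UnderFirst, ZMod.val_pos, sub_eq_zero] using D.o_ne_u c c

lemma coeff_Xpoly (j : ℕ) : D.Xpoly.coeff j = #{c | D.d (D.o c) = j} := by
  simp only [Xpoly, finsetSum_coeff, coeff_X_pow, sum_boole, eq_comm]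

def IsMirror (Dm D : GaussCode n) : Prop := ∀ e, Dm.g e = ((D.g e).1, !(D.g e).2)

lemma IsMirror.o_eq_u {Dm D : GaussCode n} (h : Dm.IsMirror D) (c : Fin n) : Dm.o c = D.u c :=
  ((Dm.over_iff c _).1 (by rw [h, g_u]; rfl)).symm

lemma IsMirror.u_eq_o {Dm D : GaussCode n} (h : Dm.IsMirror D) (c : Fin n) : Dm.u c = D.o c :=
  ((Dm.under_iff c _).1 (by rw [h, g_o]; rfl)).symm

variable [NeZero n]

lemma underFirst_add_one_iff {e : ZMod (2 * n)} {c : Fin n} (ho : D.o c ≠ e) (hu : D.u c ≠ e) :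
    D.UnderFirst (e + 1) c ↔ D.UnderFirst e c := by
  have := ZMod.val_sub_add_one_add_one ho
  have := ZMod.val_sub_add_one_add_one hu
  unfold UnderFirst
  omega

lemma underFirst_o_add_one (c : Fin n) : D.UnderFirst (D.o c + 1) c := by
  have := ZMod.val_sub_add_one_add_one (D.o_ne_u c c).symm
  have := ZMod.val_sub_add_one_self_add_one (D.o c)
  have := (D.u c - D.o c).val_lt
  unfold UnderFirst
  omega

lemma not_underFirst_u_add_one (c : Fin n) : ¬D.UnderFirst (D.u c + 1) c := by
  have := ZMod.val_sub_add_one_add_one (D.o_ne_u c c)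
  have := ZMod.val_sub_add_one_self_add_one (D.u c)
  have := (D.o c - D.u c).val_lt
  unfold UnderFirst
  omega

lemma d_o_add_one (c : Fin n) : D.d (D.o c + 1) = D.d (D.o c) + 1 :=
  card_filter_eq_card_filter_add_one (D.not_underFirst_o c) (D.underFirst_o_add_one c)
    fun c' hc' => D.underFirst_add_one_iff (D.o_injective.ne hc') (D.o_ne_u c c').symm

lemma d_u (c : Fin n) : D.d (D.u c) = D.d (D.u c + 1) + 1 :=
  card_filter_eq_card_filter_add_one (D.not_underFirst_u_add_one c) (D.underFirst_u c)
    fun c' hc' => (D.underFirst_add_one_iff (D.o_ne_u c' c) (D.u_injective.ne hc')).symm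

lemma card_filter_d_o_eq_card_filter_d_u (m : ℕ) :
    #{c | D.d (D.o c) = m} = #{c | D.d (D.u c) = m + 1} := by
  have key : #{e | D.d e ≤ m ∧ ¬D.d (e + 1) ≤ m} = #{e | ¬D.d e ≤ m ∧ D.d (e + 1) ≤ m} :=
    (Equiv.addRight 1).card_filter_and_not_apply_eq _
  simp only [D.card_filter_eq_card_filter_o_add_card_filter_u] at key
  have up_at_o (c : Fin n) : D.d (D.o c) ≤ m ∧ ¬D.d (D.o c + 1) ≤ m ↔ D.d (D.o c) = m := by
    rw [d_o_add_one]; omega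
  have down_at_u (c : Fin n) : ¬D.d (D.u c) ≤ m ∧ D.d (D.u c + 1) ≤ m ↔ D.d (D.u c) = m + 1 := by
    rw [d_u]; omega
  have not_up_at_u (c : Fin n) : ¬(D.d (D.u c) ≤ m ∧ ¬D.d (D.u c + 1) ≤ m) := by
    rw [d_u]; omega
  have not_down_at_o (c : Fin n) : ¬(¬D.d (D.o c) ≤ m ∧ D.d (D.o c + 1) ≤ m) := by
    rw [d_o_add_one]; omega
  simpa only [up_at_o, down_at_u, not_up_at_u, not_down_at_o, filter_false, card_empty,
    add_zero, zero_add] using key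

lemma IsMirror.underFirst_iff {Dm D : GaussCode n} (h : Dm.IsMirror D) (e : ZMod (2 * n))
    (c : Fin n) : Dm.UnderFirst e c ↔ ¬D.UnderFirst e c := by
  have hne : (D.o c - e).val ≠ (D.u c - e).val :=
    fun hv => D.o_ne_u c c (sub_left_injective (ZMod.val_injective _ hv))
  unfold UnderFirst
  rw [h.o_eq_u, h.u_eq_o]
  omega

lemma IsMirror.d_add_d {Dm D : GaussCode n} (h : Dm.IsMirror D) (e : ZMod (2 * n)) :
    Dm.d e + D.d e = n := by
  rw [d_eq_card, d_eq_card, filter_congr fun c _ => h.underFirst_iff e c, add_comm,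
    card_filter_add_card_filter_not, card_univ, Fintype.card_fin]

end GaussCode

/-- The warping crossing polynomial of the mirror image `D*` is the reflection of that
of `D` at degree `n − 1`: `X_{D*}(t) = t^(n−1) X_D(t⁻¹)`. -/
theorem Xpoly_mirror
    (n : ℕ) (hn : 1 ≤ n) (D Dm : GaussCode n)
    (h : ∀ e : ZMod (2 * n), Dm.g e = ((D.g e).1, !(D.g e).2)) :
    ∀ k : ℕ, k ≤ n - 1 → Dm.Xpoly.coeff k = D.Xpoly.coeff (n - 1 - k) := by
  intro k hk
  have : NeZero n := ⟨by omega⟩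
  have hm : Dm.IsMirror D := h
  rw [Dm.coeff_Xpoly, D.coeff_Xpoly, D.card_filter_d_o_eq_card_filter_d_u]
  congr 2
  refine filter_congr fun c _ => ?_
  have := hm.d_add_d (D.u c)
  rw [hm.o_eq_u]
  omega
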